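/- arXiv:1703.00905 — 8 statements merged into one kernel-verified Lean document; each statement's English description precedes it below -/
import Mathlib

section
/- Let K be a field, d ≥ 1, and let x_1, …, x_d be pairwise distinct elements of K. Then for every integer r ≥ 0, the complete homogeneous symmetric polynomial of degree r evaluated at x_1, …, x_d satisfies h_r(x_1, …, x_d) = Σ_{ℓ=1}^{d} x_ℓ^{r+d−1} · ∏_{m ≠ ℓ} 1/(x_ℓ − x_m). -/
open Finset Polynomial

/-- Lagrange-interpolation fact: for `t + 1 < #s`, the weighted power sums of
exponent `t` with nodal weights vanish. -/
lemma jacobi_lag_aux {K : Type*} [Field K] {ι : Type*} [DecidableEq ι] (s : Finset ι)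
    (v : ι → K) (hv : Set.InjOn v s) (t : ℕ) (ht : t + 1 < s.card) :
    ∑ ℓ ∈ s, v ℓ ^ t * ∏ m ∈ s.erase ℓ, (v ℓ - v m)⁻¹ = 0 := by
  have hdeg : ((X : K[X]) ^ t).degree < s.card := by
    rw [degree_X_pow]
    exact_mod_cast Nat.lt_of_succ_lt ht
  have h := Lagrange.eq_interpolate hv hdeg
  have key : ∀ ℓ ∈ s, (C (eval (v ℓ) ((X : K[X]) ^ t)) * Lagrange.basis s v ℓ).coeff
        (s.card - 1) = v ℓ ^ t * ∏ m ∈ s.erase ℓ, (v ℓ - v m)⁻¹ := by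
    intro ℓ hℓ
    have hb : Lagrange.basis s v ℓ
        = C (Lagrange.nodalWeight s v ℓ) * Lagrange.nodal (s.erase ℓ) v := by
      rw [Lagrange.basis_eq_prod_sub_inv_mul_nodal_div hℓ, ← Lagrange.nodal_erase_eq_nodal_div hℓ]
    have hdeg' : (Lagrange.nodal (s.erase ℓ) v).natDegree = s.card - 1 := by
      rw [Lagrange.natDegree_nodal, card_erase_of_mem hℓ]
    have hcoeff : (Lagrange.nodal (s.erase ℓ) v).coeff (s.card - 1) = 1 := by
      rw [← hdeg']
      exact Lagrange.nodal_monic.coeff_natDegree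
    rw [hb, coeff_C_mul, coeff_C_mul, hcoeff, eval_pow, eval_X, mul_one]
    rfl
  calc ∑ ℓ ∈ s, v ℓ ^ t * ∏ m ∈ s.erase ℓ, (v ℓ - v m)⁻¹
      = ∑ ℓ ∈ s, (C (eval (v ℓ) ((X : K[X]) ^ t)) * Lagrange.basis s v ℓ).coeff (s.card - 1) :=
        (Finset.sum_congr rfl key).symm
    _ = (Lagrange.interpolate s v fun i => eval (v i) ((X : K[X]) ^ t)).coeff (s.card - 1) := by
        rw [Lagrange.interpolate_apply, Polynomial.finset_sum_coeff]
    _ = ((X : K[X]) ^ t).coeff (s.card - 1) := by rw [← h]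
    _ = 0 := by rw [coeff_X_pow, if_neg (by omega)]

lemma jacobi_piAntidiag_singleton {ι : Type*} [DecidableEq ι] (i : ι) (n : ℕ) :
    Finset.piAntidiag {i} n = {fun j => if j = i then n else 0} := by
  ext f
  simp only [Finset.mem_piAntidiag, Finset.sum_singleton, Finset.mem_singleton]
  constructor
  · rintro ⟨rfl, h⟩
    funext j
    by_cases hj : j = i
    · subst hj; simp
    · simp only [hj, if_false]
      by_contra hne
      exact hj (h j hne)
  · rintro rfl
    refine ⟨by simp, fun j hj => ?_⟩
    by_contra hne
    simp [hne] at hj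

lemma jacobi_key {K : Type*} [Field K] {ι : Type*} [DecidableEq ι] (s : Finset ι) :
    ∀ v : ι → K, Set.InjOn v s → s.Nonempty → ∀ r : ℕ,
    ∑ k ∈ s.piAntidiag r, ∏ i ∈ s, v i ^ k i
      = ∑ ℓ ∈ s, v ℓ ^ (r + s.card - 1) * ∏ m ∈ s.erase ℓ, (v ℓ - v m)⁻¹ := by
  induction s using Finset.cons_induction with
  | empty => intro v _ h; simp at h
  | cons i t hi ih =>
    intro v hv _ r
    rcases t.eq_empty_or_nonempty with rfl | ht
    · simp [cons_empty, jacobi_piAntidiag_singleton]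
    · have hn : 1 ≤ t.card := Finset.card_pos.mpr ht
      have hsub : (t : Set ι) ⊆ (Finset.cons i t hi : Finset ι) := by
        intro a ha; simp only [coe_cons, Set.mem_insert_iff]
        exact Or.inr ha
      have hvt : Set.InjOn v t := hv.mono hsub
      have hmemi : i ∈ Finset.cons i t hi := mem_cons_self i t
      have hne : ∀ ℓ ∈ t, v ℓ ≠ v i := by
        intro ℓ hℓ h
        exact (ne_of_mem_of_not_mem hℓ hi)
          (hv (hsub hℓ) hmemi h)
      -- abbreviations
      set n := t.card with hncard
      -- C ℓ : the full nodal weight over cons i t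
      have hC : ∀ ℓ ∈ t, ∏ m ∈ (Finset.cons i t hi).erase ℓ, (v ℓ - v m)⁻¹
          = (v ℓ - v i)⁻¹ * ∏ m ∈ t.erase ℓ, (v ℓ - v m)⁻¹ := by
        intro ℓ hℓ
        rw [Finset.erase_cons_of_ne hi (ne_of_mem_of_not_mem hℓ hi).symm,
          Finset.prod_cons]
      -- Lagrange vanishing with exponent n - 1
      have hlag := jacobi_lag_aux (Finset.cons i t hi) v hv (n - 1)
        (by rw [card_cons]; omega)
      rw [Finset.sum_cons, Finset.erase_cons] at hlag
      -- step 1 : LHS as double sum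
      rw [Finset.piAntidiag_cons hi, Finset.sum_disjiUnion]
      have hA : ∀ p ∈ antidiagonal r,
          (∑ k ∈ (Finset.piAntidiag t p.2).map
              (addRightEmbedding fun j => if j = i then p.1 else 0),
            ∏ j ∈ Finset.cons i t hi, v j ^ k j)
          = v i ^ p.1 * ∑ g ∈ Finset.piAntidiag t p.2, ∏ j ∈ t, v j ^ g j := by
        intro p _
        rw [Finset.sum_map, Finset.mul_sum]
        refine Finset.sum_congr rfl fun g hg => ?_
        have hgi : g i = 0 := by
          by_contra h
          exact hi ((Finset.mem_piAntidiag.mp hg).2 i h)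
        rw [Finset.prod_cons]
        simp only [addRightEmbedding_apply, Pi.add_apply, hgi, if_true, zero_add]
        congr 1
        refine Finset.prod_congr rfl fun j hj => ?_
        rw [if_neg (ne_of_mem_of_not_mem hj hi), add_zero]
      rw [Finset.sum_congr rfl hA]
      -- step 2 : apply induction hypothesis and reorganize
      have hIH : ∀ p ∈ antidiagonal r,
          v i ^ p.1 * ∑ g ∈ Finset.piAntidiag t p.2, ∏ j ∈ t, v j ^ g j
          = ∑ ℓ ∈ t, (v i ^ p.1 * v ℓ ^ p.2)
              * (v ℓ ^ (n - 1) * ∏ m ∈ t.erase ℓ, (v ℓ - v m)⁻¹) := by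
        intro p _
        rw [ih v hvt ht p.2, Finset.mul_sum]
        refine Finset.sum_congr rfl fun ℓ _ => ?_
        have : p.2 + n - 1 = p.2 + (n - 1) := by omega
        rw [this, pow_add]
        ring
      rw [Finset.sum_congr rfl hIH, Finset.sum_comm]
      -- step 3 : geometric sum
      have hgeom : ∀ ℓ ∈ t, (v ℓ - v i) * ∑ p ∈ antidiagonal r, v i ^ p.1 * v ℓ ^ p.2
          = v ℓ ^ (r + 1) - v i ^ (r + 1) := by
        intro ℓ _
        have hswap : ∑ p ∈ antidiagonal r, v i ^ p.1 * v ℓ ^ p.2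
            = ∑ j ∈ Finset.range (r + 1), v ℓ ^ j * v i ^ (r + 1 - 1 - j) := by
          rw [Finset.Nat.sum_antidiagonal_eq_sum_range_succ_mk,
            ← Finset.sum_range_reflect (fun j => v ℓ ^ j * v i ^ (r + 1 - 1 - j)) (r + 1)]
          refine Finset.sum_congr rfl fun k hk => ?_
          rw [Finset.mem_range] at hk
          have h1 : r + 1 - 1 - k = r - k := by omega
          have h2 : r + 1 - 1 - (r - k) = k := by omega
          rw [h1, h2]
          ring
        rw [hswap, mul_comm, geom_sum₂_mul]
      -- step 4 : final algebraic identity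
      rw [Finset.sum_cons, card_cons]
      have hrn : r + (n + 1) - 1 = r + n := by omega
      rw [hrn, Finset.erase_cons]
      have hterm : ∀ ℓ ∈ t,
          ∑ p ∈ antidiagonal r, (v i ^ p.1 * v ℓ ^ p.2)
              * (v ℓ ^ (n - 1) * ∏ m ∈ t.erase ℓ, (v ℓ - v m)⁻¹)
          = v ℓ ^ (r + n) * ∏ m ∈ (Finset.cons i t hi).erase ℓ, (v ℓ - v m)⁻¹
            - v i ^ (r + 1) * (v ℓ ^ (n - 1)
              * ∏ m ∈ (Finset.cons i t hi).erase ℓ, (v ℓ - v m)⁻¹) := by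
        intro ℓ hℓ
        have hvne : v ℓ - v i ≠ 0 := sub_ne_zero.mpr (hne ℓ hℓ)
        have hg := hgeom ℓ hℓ
        have hpow : v ℓ ^ (r + n) = v ℓ ^ (n - 1) * v ℓ ^ (r + 1) := by
          rw [← pow_add]
          congr 1
          omega
        have hSval : (∑ p ∈ antidiagonal r, v i ^ p.1 * v ℓ ^ p.2)
            = (v ℓ ^ (r + 1) - v i ^ (r + 1)) * (v ℓ - v i)⁻¹ := by
          rw [eq_mul_inv_iff_mul_eq₀ hvne]
          linear_combination hg
        rw [← Finset.sum_mul, hC ℓ hℓ, hSval, hpow]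
        ring
      rw [Finset.sum_congr rfl hterm, Finset.sum_sub_distrib, ← Finset.mul_sum]
      have hlag' : ∑ ℓ ∈ t, v ℓ ^ (n - 1)
          * ∏ m ∈ (Finset.cons i t hi).erase ℓ, (v ℓ - v m)⁻¹
          = - (v i ^ (n - 1) * ∏ m ∈ t, (v i - v m)⁻¹) := by
        exact eq_neg_of_add_eq_zero_right hlag
      rw [hlag']
      have hpow2 : v i ^ (r + n) = v i ^ (r + 1) * v i ^ (n - 1) := by
        rw [← pow_add]; congr 1; omega
      rw [hpow2]
      ring
/-- Jacobi / Louck–Biedenharn / Cornelius identity for complete homogeneous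
symmetric polynomials (Lemma 1.5 / Theorem C.2). -/
theorem jacobi_complete_homogeneous {K : Type*} [Field K] (d : ℕ) (hd : 1 ≤ d)
    (x : Fin d → K) (hx : Function.Injective x) (r : ℕ) :
    (∑ k ∈ Finset.Nat.antidiagonalTuple d r, ∏ i, x i ^ k i)
      = ∑ ℓ, x ℓ ^ (r + d - 1) * ∏ m ∈ Finset.univ.erase ℓ, (x ℓ - x m)⁻¹ := by
  haveI : Nonempty (Fin d) := ⟨⟨0, hd⟩⟩
  have h := jacobi_key (Finset.univ : Finset (Fin d)) x
    hx.injOn Finset.univ_nonempty r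
  rw [Finset.piAntidiag_univ_fin_eq_antidiagonalTuple] at h
  simpa [Finset.card_univ] using h
end

section
/- Let K be a field, d ≥ 1, and let z_1, …, z_d be pairwise distinct elements of K. Define the moments M_ℓ = ∏_{m ≠ ℓ} z_m/(z_m − z_ℓ). Then for every integer n ≥ d one has Σ_{ℓ=1}^{d} z_ℓ^n · M_ℓ = (−1)^{d+1} · h_{n−d}(z_1, …, z_d) · z_1 ⋯ z_d. -/
/-!
Put `c ℓ = ∏_{m ≠ ℓ} z_ℓ / (z_ℓ - z_m)`. Lagrange interpolation of `X ^ (d - 1)` at the nodes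
`z_ℓ` gives `∑ c ℓ ∏_{m ≠ ℓ} (X - z_m) = X ^ (d - 1)`; reflecting this identity yields the partial
fraction decomposition `∏ᵢ 1 / (1 - zᵢ X) = ∑ c ℓ / (1 - z_ℓ X)` in `K⟦X⟧`. Comparing
coefficients of `X ^ r` gives `h_r(z) = ∑ c ℓ z_ℓ ^ r`, and termwise
`z_ℓ ^ n M_ℓ = (-1) ^ (d + 1) c ℓ z_ℓ ^ (n - d) z₁ ⋯ z_d`.
-/

open Finset

theorem Finset.sum_finsuppAntidiag_eq_sum_piAntidiag {ι M : Type*} [DecidableEq ι]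
    [AddCommMonoid M] (s : Finset ι) (n : ℕ) (g : (ι → ℕ) → M) :
    ∑ l ∈ finsuppAntidiag s n, g l = ∑ f ∈ piAntidiag s n, g f := by
  rw [finsuppAntidiag, sum_map, ← sum_attach (piAntidiag s n)]
  rfl

namespace PowerSeries

variable {R : Type*} [CommRing R]

theorem mk_pow_mul_one_sub_C_mul_X (a : R) : mk (a ^ ·) * (1 - C a * X) = 1 := by
  simpa [rescale_mk, rescale_X] using congrArg (rescale a) (mk_one_mul_one_sub_eq_one R)

theorem coeff_prod_mk_pow {ι : Type*} [Fintype ι] [DecidableEq ι] (z : ι → R) (r : ℕ) :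
    coeff r (∏ i, mk (z i ^ ·)) = ∑ k ∈ piAntidiag univ r, ∏ i, z i ^ k i := by
  simp only [coeff_prod, coeff_mk]
  exact sum_finsuppAntidiag_eq_sum_piAntidiag _ _ (fun k => ∏ i, z i ^ k i)

end PowerSeries

namespace Polynomial

theorem reflect_prod_X_sub_C {R ι : Type*} [CommRing R] (s : Finset ι) (z : ι → R) :
    reflect #s (∏ m ∈ s, (X - C (z m))) = ∏ m ∈ s, (1 - C (z m) * X) := by
  classical
  induction s using Finset.induction_on with
  | empty => simp
  | insert a s ha ih =>
    rw [prod_insert ha, prod_insert ha, card_insert_of_notMem ha, add_comm, reflect_mul, ih]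
    · simp [reflect_sub, reflect_C]
    · exact natDegree_X_sub_C_le (z a)
    · exact (natDegree_prod_le _ _).trans
        ((sum_le_card_nsmul _ _ 1 fun m _ => natDegree_X_sub_C_le (z m)).trans (by simp))

theorem reflect_sum {R ι : Type*} [Semiring R] (N : ℕ) (s : Finset ι) (f : ι → R[X]) :
    reflect N (∑ i ∈ s, f i) = ∑ i ∈ s, reflect N (f i) :=
  map_sum ({ toFun := reflect N, map_zero' := reflect_zero, map_add' := (reflect_add · · N) } :
    R[X] →+ R[X]) f s

end Polynomial

open Polynomial Function

section PartialFractions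

variable {K ι : Type*} [Field K] [Fintype ι] [DecidableEq ι]

def partialFractionCoeff (z : ι → K) (ℓ : ι) : K :=
  ∏ m ∈ univ.erase ℓ, z ℓ / (z ℓ - z m)

theorem sum_C_partialFractionCoeff_mul_prod_X_sub_C [Nonempty ι] {z : ι → K}
    (hz : Injective z) :
    ∑ ℓ, C (partialFractionCoeff z ℓ) * ∏ m ∈ univ.erase ℓ, (X - C (z m)) =
      X ^ (Fintype.card ι - 1) := by
  have hdeg : (X ^ (Fintype.card ι - 1) : K[X]).degree < #(univ : Finset ι) := by
    rw [degree_X_pow, card_univ]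
    exact_mod_cast Nat.sub_lt Fintype.card_pos one_pos
  rw [Lagrange.eq_interpolate hz.injOn hdeg, Lagrange.interpolate_apply]
  refine sum_congr rfl fun ℓ _ => ?_
  simp only [Lagrange.basis, Lagrange.basisDivisor, prod_mul_distrib, partialFractionCoeff,
    div_eq_mul_inv, eval_pow, eval_X, ← map_prod, map_mul, prod_const,
    card_erase_of_mem (mem_univ ℓ), card_univ]
  ring

theorem sum_C_partialFractionCoeff_mul_prod_one_sub_C_mul_X [Nonempty ι] {z : ι → K}
    (hz : Injective z) :
    ∑ ℓ, C (partialFractionCoeff z ℓ) * ∏ m ∈ univ.erase ℓ, (1 - C (z m) * X) = 1 := by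
  have h := congrArg (reflect (Fintype.card ι - 1))
    (sum_C_partialFractionCoeff_mul_prod_X_sub_C hz)
  rw [reflect_monomial, revAt_le le_rfl, Nat.sub_self, pow_zero, reflect_sum] at h
  refine (sum_congr rfl fun ℓ _ => ?_).trans h
  rw [reflect_C_mul, ← card_univ, ← card_erase_of_mem (mem_univ ℓ), reflect_prod_X_sub_C]

theorem prod_mk_pow_eq_sum_C_partialFractionCoeff_mul [Nonempty ι] {z : ι → K}
    (hz : Injective z) :
    ∏ i, PowerSeries.mk (z i ^ ·) =
      ∑ ℓ, PowerSeries.C (partialFractionCoeff z ℓ) * PowerSeries.mk (z ℓ ^ ·) := by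
  have hone : ∑ ℓ, PowerSeries.C (partialFractionCoeff z ℓ) *
      ∏ m ∈ univ.erase ℓ, (1 - PowerSeries.C (z m) * PowerSeries.X) = 1 := by
    simpa only [map_sum, map_mul, map_prod, map_sub, map_one, coeToPowerSeries.ringHom_apply,
      coe_C, coe_X] using congrArg coeToPowerSeries.ringHom
      (sum_C_partialFractionCoeff_mul_prod_one_sub_C_mul_X hz)
  have hcancel (ℓ : ι) : (∏ i, PowerSeries.mk (z i ^ ·)) *
      ∏ m ∈ univ.erase ℓ, (1 - PowerSeries.C (z m) * PowerSeries.X) =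
        PowerSeries.mk (z ℓ ^ ·) := by
    rw [← mul_prod_erase univ _ (mem_univ ℓ), mul_assoc, ← prod_mul_distrib,
      prod_congr rfl fun m _ => PowerSeries.mk_pow_mul_one_sub_C_mul_X (z m), prod_const_one,
      mul_one]
  rw [← mul_one (∏ i, _), ← hone, mul_sum]
  exact sum_congr rfl fun ℓ _ => by rw [mul_left_comm, hcancel]

theorem sum_piAntidiag_prod_pow_eq_sum_partialFractionCoeff_mul_pow [Nonempty ι] {z : ι → K}
    (hz : Injective z) (r : ℕ) :
    ∑ k ∈ piAntidiag univ r, ∏ i, z i ^ k i = ∑ ℓ, partialFractionCoeff z ℓ * z ℓ ^ r := by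
  rw [← PowerSeries.coeff_prod_mk_pow, prod_mk_pow_eq_sum_C_partialFractionCoeff_mul hz]
  simp [PowerSeries.coeff_C_mul]

theorem pow_mul_prod_div_sub_eq [Nonempty ι] (z : ι → K) (ℓ : ι) {n : ℕ}
    (hn : Fintype.card ι ≤ n) :
    z ℓ ^ n * ∏ m ∈ univ.erase ℓ, z m / (z m - z ℓ) =
      (-1) ^ (Fintype.card ι + 1) * (partialFractionCoeff z ℓ * z ℓ ^ (n - Fintype.card ι)) *
        ∏ i, z i := by
  obtain ⟨k, hk⟩ := Nat.exists_eq_add_one.mpr (Fintype.card_pos (α := ι))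
  obtain ⟨j, rfl⟩ := Nat.exists_eq_add_of_le hn
  have hs : #(univ.erase ℓ) = k := by rw [card_erase_of_mem (mem_univ ℓ), card_univ, hk]; rfl
  have hsign : ∏ m ∈ univ.erase ℓ, z m / (z m - z ℓ) =
      (-1) ^ k * ∏ m ∈ univ.erase ℓ, z m / (z ℓ - z m) := by
    rw [← hs, ← prod_const, ← prod_mul_distrib]
    exact prod_congr rfl fun m _ => by rw [← neg_sub, div_neg, neg_one_mul]
  have hcoeff : partialFractionCoeff z ℓ * ∏ m ∈ univ.erase ℓ, z m =
      z ℓ ^ k * ∏ m ∈ univ.erase ℓ, z m / (z ℓ - z m) := by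
    rw [partialFractionCoeff, ← prod_mul_distrib, ← hs, ← prod_const, ← prod_mul_distrib]
    exact prod_congr rfl fun m _ => by ring
  rw [← mul_prod_erase univ z (mem_univ ℓ), hsign, hk, Nat.add_sub_cancel_left]
  linear_combination -(-1) ^ k * z ℓ ^ (j + 1) * hcoeff

end PartialFractions

/-- High-degree moment identity: `∑ z_ℓ^n M_ℓ = (-1)^{d+1} h_{n-d}(z) z_1 ⋯ z_d`
for `n ≥ d` (Lemmas 3.2 and 3.3). -/
theorem moments_high_degree {K : Type*} [Field K] (d : ℕ) (hd : 1 ≤ d)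
    (z : Fin d → K) (hz : Function.Injective z) (n : ℕ) (hn : d ≤ n) :
    (∑ ℓ, z ℓ ^ n * ∏ m ∈ Finset.univ.erase ℓ, z m / (z m - z ℓ))
      = (-1 : K) ^ (d + 1) *
        (∑ k ∈ Finset.Nat.antidiagonalTuple d (n - d), ∏ i, z i ^ k i) *
        ∏ i, z i := by
  have : Nonempty (Fin d) := ⟨⟨0, hd⟩⟩
  rw [← piAntidiag_univ_fin_eq_antidiagonalTuple,
    sum_piAntidiag_prod_pow_eq_sum_partialFractionCoeff_mul_pow hz, mul_sum, sum_mul]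
  refine sum_congr rfl fun ℓ _ => ?_
  simpa using pow_mul_prod_div_sub_eq z ℓ ((Fintype.card_fin d).trans_le hn)
end

section
/- Let R be a commutative ring and L, S, c_1 ∈ R. In R[[t]], the coefficient of t^2 in 6(2Lt + 3LSt^2 − S^2t^2) · ((1 + St)(1 + 6Lt − 2St))^{-1} · (1 + c_1 t) equals 6(2c_1 L − 12L^2 + 5LS − S^2); moreover the coefficient of t^1 equals 12L. -/
open PowerSeries

/-! Clearing the denominator `u = 1 + aX + bX²` turns the quotient `ψ = φ / u` into the linear
recursion `ψₙ = φₙ - a ψₙ₋₁ - b ψₙ₋₂`. The numerator `6(2Lt + (3LS - S²)t²)(1 + c₁t)` has no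
constant term, so the first two steps of the recursion give the coefficients `12L` and
`(18LS - 6S² + 12c₁L) - (6L - S)·12L`. -/

namespace PowerSeries

variable {R : Type*} [CommRing R]

lemma isUnit_one_add_C_mul_X_add_C_mul_X_sq (a b : R) :
    IsUnit (1 + C a * X + C b * (X ^ 2 : R⟦X⟧)) := by
  simp [isUnit_iff_constantCoeff]

section QuadraticMultiplier

variable (φ : R⟦X⟧) (a b : R)

lemma mul_one_add_C_mul_X_add_C_mul_X_sq :
    φ * (1 + C a * X + C b * X ^ 2) = φ + C a * (φ * X) + C b * (φ * X ^ 2) := by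
  ring

lemma coeff_zero_mul_one_add_C_mul_X_add_C_mul_X_sq :
    coeff 0 (φ * (1 + C a * X + C b * X ^ 2)) = coeff 0 φ := by
  rw [mul_one_add_C_mul_X_add_C_mul_X_sq]
  simp

lemma coeff_one_mul_one_add_C_mul_X_add_C_mul_X_sq :
    coeff 1 (φ * (1 + C a * X + C b * X ^ 2)) = coeff 1 φ + a * coeff 0 φ := by
  rw [mul_one_add_C_mul_X_add_C_mul_X_sq]
  simp [coeff_mul_X_pow']

lemma coeff_add_two_mul_one_add_C_mul_X_add_C_mul_X_sq (n : ℕ) :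
    coeff (n + 2) (φ * (1 + C a * X + C b * X ^ 2)) =
      coeff (n + 2) φ + a * coeff (n + 1) φ + b * coeff n φ := by
  rw [mul_one_add_C_mul_X_add_C_mul_X_sq]
  simp only [map_add, coeff_C_mul, coeff_succ_mul_X, coeff_mul_X_pow]

variable {φ a b} in
lemma coeff_zero_one_two_of_mul_one_add_C_mul_X_add_C_mul_X_sq_eq {ψ : R⟦X⟧}
    (hψ : ψ * (1 + C a * X + C b * X ^ 2) = φ) :
    coeff 0 ψ = coeff 0 φ ∧ coeff 1 ψ = coeff 1 φ - a * coeff 0 φ ∧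
      coeff 2 ψ = coeff 2 φ - a * coeff 1 φ + (a ^ 2 - b) * coeff 0 φ := by
  have h2 : coeff 2 (ψ * (1 + C a * X + C b * X ^ 2)) = coeff 2 ψ + a * coeff 1 ψ + b * coeff 0 ψ :=
    coeff_add_two_mul_one_add_C_mul_X_add_C_mul_X_sq ψ a b 0
  rw [← hψ, coeff_zero_mul_one_add_C_mul_X_add_C_mul_X_sq, coeff_one_mul_one_add_C_mul_X_add_C_mul_X_sq, h2]
  exact ⟨rfl, by ring, by ring⟩

end QuadraticMultiplier

end PowerSeries

/-- SU(2)-model generating function: coefficients of `t^2` and `t^1`. -/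
theorem euler_su2_dim2 {R : Type*} [CommRing R] (L S c₁ : R) :
    (PowerSeries.coeff (R := R) 2)
      (6 * (2 * C (R := R) L * X + 3 * C (R := R) L * C (R := R) S * X ^ 2 - C (R := R) S ^ 2 * X ^ 2) *
        Ring.inverse ((1 + C (R := R) S * X) * (1 + 6 * C (R := R) L * X - 2 * C (R := R) S * X)) *
        (1 + C (R := R) c₁ * X))
      = 6 * (2 * c₁ * L - 12 * L ^ 2 + 5 * L * S - S ^ 2) ∧
    (PowerSeries.coeff (R := R) 1)
      (6 * (2 * C (R := R) L * X + 3 * C (R := R) L * C (R := R) S * X ^ 2 - C (R := R) S ^ 2 * X ^ 2) *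
        Ring.inverse ((1 + C (R := R) S * X) * (1 + 6 * C (R := R) L * X - 2 * C (R := R) S * X)) *
        (1 + C (R := R) c₁ * X))
      = 12 * L := by
  set P : R⟦X⟧ := 6 * (2 * C L * X + 3 * C L * C S * X ^ 2 - C S ^ 2 * X ^ 2)
  set Q : R⟦X⟧ := 1 + C c₁ * X
  set u : R⟦X⟧ := (1 + C S * X) * (1 + 6 * C L * X - 2 * C S * X)
  have hu : u = 1 + C (6 * L - S) * X + C (6 * L * S - 2 * S ^ 2) * X ^ 2 := by
    simp only [u, map_sub, map_mul, map_ofNat, map_pow]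
    ring
  have hPQ : P * Q = C (12 * L) * X + C (18 * L * S - 6 * S ^ 2 + 12 * c₁ * L) * X ^ 2 +
      C (c₁ * (18 * L * S - 6 * S ^ 2)) * X ^ 3 := by
    simp only [P, Q, map_add, map_sub, map_mul, map_ofNat, map_pow]
    ring
  have hdiv : P * Ring.inverse u * Q * (1 + C (6 * L - S) * X + C (6 * L * S - 2 * S ^ 2) * X ^ 2) =
      P * Q := by
    rw [← hu, mul_right_comm _ Q, mul_assoc P,
      Ring.inverse_mul_cancel _ (hu ▸ isUnit_one_add_C_mul_X_add_C_mul_X_sq _ _), mul_one]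
  obtain ⟨-, h1, h2⟩ := coeff_zero_one_two_of_mul_one_add_C_mul_X_add_C_mul_X_sq_eq hdiv
  rw [h1, h2, hPQ]
  simp only [LinearMap.map_add, coeff_C_mul, coeff_X, coeff_X_pow]
  norm_num
  ring
end

section
/- Let R be a commutative ring and L, S, c_1, c_2 ∈ R. In R[[t]], the coefficient of t^3 in 6(2Lt + 3LSt^2 − S^2t^2) · ((1 + St)(1 + 6Lt − 2St))^{-1} · (1 + c_1 t + c_2 t^2) equals 6(−12c_1L^2 + 5c_1LS − c_1S^2 + 2c_2L + 72L^3 − 54L^2S + 15LS^2 − S^3). -/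
/-!
Since `u = (1 + St)(1 + 6Lt − 2St)` has constant term `1`, the coefficients of `f · u⁻¹` up to
`t^n` only depend on `f` modulo `t^(n+1)`: if `f ≡ u · g (mod t^(n+1))` they are those of `g`.
Long division of the numerator `6(2Lt + 3LSt² − S²t²)(1 + c₁t + c₂t²)` by `u` gives such a
polynomial `g` of degree `3`, with an explicit remainder of order `t⁴`; its top coefficient is
the claimed Euler characteristic.
-/

open PowerSeries

namespace PowerSeries

variable {R : Type*} [CommRing R]

theorem coeff_inverse_mul_eq_of_X_pow_dvd_sub {u f g : R⟦X⟧} (hu : IsUnit u) {n m : ℕ}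
    (h : X ^ n ∣ f - u * g) (hm : m < n) :
    coeff m (Ring.inverse u * f) = coeff m g := by
  have hsub : Ring.inverse u * f - g = Ring.inverse u * (f - u * g) := by
    rw [mul_sub, ← mul_assoc, Ring.inverse_mul_cancel u hu, one_mul]
  rw [← sub_eq_zero, ← map_sub, hsub]
  exact X_pow_dvd_iff.mp (dvd_mul_of_dvd_right h _) m hm

end PowerSeries

/-- SU(2)-model generating function: coefficient of `t^3` (elliptic fourfolds). -/
theorem euler_su2_dim3 {R : Type*} [CommRing R] (L S c₁ c₂ : R) :
    (PowerSeries.coeff (R := R) 3)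
      (6 * (2 * C L * X + 3 * C L * C S * X ^ 2 - C S ^ 2 * X ^ 2) *
        Ring.inverse ((1 + C S * X) * (1 + 6 * C L * X - 2 * C S * X)) *
        (1 + C c₁ * X + C c₂ * X ^ 2))
      = 6 * (-12 * c₁ * L ^ 2 + 5 * c₁ * L * S - c₁ * S ^ 2 + 2 * c₂ * L
          + 72 * L ^ 3 - 54 * L ^ 2 * S + 15 * L * S ^ 2 - S ^ 3) := by
  set u : R⟦X⟧ := (1 + C S * X) * (1 + 6 * C L * X - 2 * C S * X)
  set e : R := 6 * (-12 * c₁ * L ^ 2 + 5 * c₁ * L * S - c₁ * S ^ 2 + 2 * c₂ * L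
      + 72 * L ^ 3 - 54 * L ^ 2 * S + 15 * L * S ^ 2 - S ^ 3)
  have hu : IsUnit u := by simp [isUnit_iff_constantCoeff, u]
  have hdivision : X ^ 4 ∣
      6 * (2 * C L * X + 3 * C L * C S * X ^ 2 - C S ^ 2 * X ^ 2) * (1 + C c₁ * X + C c₂ * X ^ 2)
        - u * (C (12 * L) * X + C (12 * L * c₁ + 30 * L * S - 72 * L ^ 2 - 6 * S ^ 2) * X ^ 2
          + C e * X ^ 3) := by
    refine ⟨C (-6 * S ^ 2 * c₂ - 6 * S ^ 3 * c₁ - 18 * S ^ 4 + 30 * L * S * c₂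
        + 90 * L * S ^ 2 * c₁ + 222 * L * S ^ 3 - 72 * L ^ 2 * c₂ - 324 * L ^ 2 * S * c₁
        - 1188 * L ^ 2 * S ^ 2 + 432 * L ^ 3 * c₁ + 2808 * L ^ 3 * S - 2592 * L ^ 4)
      + C (-12 * S ^ 4 * c₁ - 12 * S ^ 5 + 24 * L * S ^ 2 * c₂ + 96 * L * S ^ 3 * c₁
        + 216 * L * S ^ 4 - 72 * L ^ 2 * S * c₂ - 324 * L ^ 2 * S ^ 2 * c₁
        - 1188 * L ^ 2 * S ^ 3 + 432 * L ^ 3 * S * c₁ + 2808 * L ^ 3 * S ^ 2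
        - 2592 * L ^ 4 * S) * X, ?_⟩
    simp only [u, e, map_mul, map_add, map_sub, map_pow, map_neg, map_ofNat]
    ring
  rw [mul_right_comm, mul_comm _ (Ring.inverse u),
    coeff_inverse_mul_eq_of_X_pow_dvd_sub hu hdivision (by norm_num)]
  simp only [map_add, coeff_C_mul, coeff_X, coeff_X_pow]
  norm_num
end

section
/- Let R be a commutative ring and L, S, c_1, c_2 ∈ R. In R[[t]], the coefficient of t^3 in 12(Lt + 2LSt^2 − S^2t^2) · ((1 + St)(1 + 6Lt − 3St))^{-1} · (1 + c_1 t + c_2 t^2) equals 12(−6c_1L^2 + 4c_1LS − c_1S^2 + c_2L + 36L^3 − 42L^2S + 17LS^2 − 2S^3). -/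
/-!
The numerator is divisible by `t`, so the coefficient of `t^3` only involves the coefficients of
`t^0, t^1, t^2` of the inverse of the denominator `1 + a t + b t^2`; these are `1, -a, a^2 - b`.
-/

open PowerSeries

section
variable {R : Type*} [CommRing R]

theorem coeff_one_one_add_X_quadratic_mul (a b : R) (f : R⟦X⟧) :
    coeff 1 ((1 + C a * X + C b * X ^ 2) * f) = coeff 1 f + a * coeff 0 f := by
  simp [add_mul, mul_assoc, coeff_X_pow_mul', coeff_succ_X_mul]

theorem coeff_succ_succ_one_add_X_quadratic_mul (a b : R) (f : R⟦X⟧) (n : ℕ) :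
    coeff (n + 2) ((1 + C a * X + C b * X ^ 2) * f)
      = coeff (n + 2) f + a * coeff (n + 1) f + b * coeff n f := by
  simp [add_mul, mul_assoc, coeff_X_pow_mul', coeff_succ_X_mul]

theorem coeff_of_one_add_X_quadratic_mul_eq_one {a b : R} {v : R⟦X⟧}
    (hv : (1 + C a * X + C b * X ^ 2) * v = 1) :
    coeff 0 v = 1 ∧ coeff 1 v = -a ∧ coeff 2 v = a ^ 2 - b := by
  have h0 : coeff 0 v = 1 := by simpa using congrArg (coeff 0) hv
  have h1 := congrArg (coeff 1) hv
  have h2 := congrArg (coeff 2) hv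
  rw [coeff_one_one_add_X_quadratic_mul, h0, coeff_one, if_neg one_ne_zero] at h1
  rw [coeff_succ_succ_one_add_X_quadratic_mul (n := 0), h0, coeff_one, if_neg two_ne_zero] at h2
  exact ⟨h0, by linear_combination h1, by linear_combination h2 - a * h1⟩

end

/-- SU(3)/USp(4)/G₂-model generating function: coefficient of `t^3`. -/
theorem euler_su3_dim3 {R : Type*} [CommRing R] (L S c₁ c₂ : R) :
    (PowerSeries.coeff (R := R) 3)
      (12 * (C (R := R) L * X + 2 * C (R := R) L * C (R := R) S * X ^ 2 - C (R := R) S ^ 2 * X ^ 2) *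
        Ring.inverse ((1 + C (R := R) S * X) * (1 + 6 * C (R := R) L * X - 3 * C (R := R) S * X)) *
        (1 + C (R := R) c₁ * X + C (R := R) c₂ * X ^ 2))
      = 12 * (-6 * c₁ * L ^ 2 + 4 * c₁ * L * S - c₁ * S ^ 2 + c₂ * L
          + 36 * L ^ 3 - 42 * L ^ 2 * S + 17 * L * S ^ 2 - 2 * S ^ 3) := by
  have hu : (1 + C S * X) * (1 + 6 * C L * X - 3 * C S * X)
      = (1 + C (6 * L - 2 * S) * X + C (6 * L * S - 3 * S ^ 2) * X ^ 2 : R⟦X⟧) := by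
    simp only [map_sub, map_mul, map_pow, map_ofNat]; ring
  set v := Ring.inverse (1 + C (6 * L - 2 * S) * X + C (6 * L * S - 3 * S ^ 2) * X ^ 2 : R⟦X⟧)
  obtain ⟨v₀, v₁, v₂⟩ := coeff_of_one_add_X_quadratic_mul_eq_one
    (Ring.mul_inverse_cancel _ (by simp [isUnit_iff_constantCoeff]) : _ * v = 1)
  have hshape : 12 * (C L * X + 2 * C L * C S * X ^ 2 - C S ^ 2 * X ^ 2) * v
        * (1 + C c₁ * X + C c₂ * X ^ 2)
      = X * (C (12 * L) * ((1 + C c₁ * X + C c₂ * X ^ 2) * v)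
        + X * (C (24 * L * S - 12 * S ^ 2) * ((1 + C c₁ * X + C c₂ * X ^ 2) * v))) := by
    simp only [map_sub, map_mul, map_pow, map_ofNat]; ring
  rw [hu, hshape, coeff_succ_X_mul, map_add, coeff_succ_X_mul, coeff_C_mul, coeff_C_mul,
    coeff_succ_succ_one_add_X_quadratic_mul (n := 0), coeff_one_one_add_X_quadratic_mul,
    v₀, v₁, v₂]
  ring
end

section
/- Let R be a commutative ring and L, S, c_1 ∈ R. In R[[t]], the coefficient of t^2 in 4(3Lt + (12L^2 + LS − 5S^2)t^2 + (30L^2S − 35LS^2 + 10S^3)t^3) · ((1 + St)(1 + 6Lt − 4St)(1 + 4Lt − 2St))^{-1} · (1 + c_1 t) equals 4(3c_1L − 18L^2 + 16LS − 5S^2). -/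
open PowerSeries

namespace PowerSeries

variable {R : Type*} [CommRing R]

theorem coeff_two_mul (φ ψ : R⟦X⟧) : coeff 2 (φ * ψ) =
    constantCoeff φ * coeff 2 ψ + coeff 1 φ * coeff 1 ψ + coeff 2 φ * constantCoeff ψ := by
  rw [coeff_mul, Finset.Nat.sum_antidiagonal_eq_sum_range_succ_mk]
  simp only [Finset.sum_range_succ, Finset.sum_range_zero, zero_add, Nat.reduceSub,
    coeff_zero_eq_constantCoeff]

theorem coeff_two_mul_inverse {u : R⟦X⟧} (hu : constantCoeff u = 1) (w : R⟦X⟧) :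
    coeff 2 (w * Ring.inverse u) =
      coeff 2 w - coeff 1 w * coeff 1 u + constantCoeff w * (coeff 1 u ^ 2 - coeff 2 u) := by
  set v := Ring.inverse u
  have hvu : v * u = 1 :=
    Ring.inverse_mul_cancel u (isUnit_iff_constantCoeff.mpr (hu ▸ isUnit_one))
  have hv0 : constantCoeff v = 1 := by simpa [hu] using congrArg constantCoeff hvu
  have hv1 : coeff 1 v = -coeff 1 u := by
    have h := congrArg (coeff 1) hvu
    rw [coeff_one_mul, coeff_one, if_neg one_ne_zero, hu, hv0] at h
    linear_combination h
  have hv2 : coeff 2 v = coeff 1 u ^ 2 - coeff 2 u := by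
    have h := congrArg (coeff 2) hvu
    rw [coeff_two_mul, coeff_one, if_neg two_ne_zero, hu, hv0, hv1] at h
    linear_combination h
  rw [coeff_two_mul, hv0, hv1, hv2]
  ring

end PowerSeries

/-- SU(4)/Spin(7)-model generating function: coefficient of `t^2`. -/
theorem euler_su4_dim2 {R : Type*} [CommRing R] (L S c₁ : R) :
    (PowerSeries.coeff (R := R) 2)
      (4 * (3 * C L * X
            + (12 * C L ^ 2 + C L * C S - 5 * C S ^ 2) * X ^ 2
            + (30 * C L ^ 2 * C S - 35 * C L * C S ^ 2
                + 10 * C S ^ 3) * X ^ 3) *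
        Ring.inverse ((1 + C S * X) * (1 + 6 * C L * X - 4 * C S * X) *
          (1 + 4 * C L * X - 2 * C S * X)) *
        (1 + C c₁ * X))
      = 4 * (3 * c₁ * L - 18 * L ^ 2 + 16 * L * S - 5 * S ^ 2) := by
  rw [mul_right_comm, coeff_two_mul_inverse (by simp)]
  -- there are no coefficient lemmas for numerals in `R⟦X⟧`, so they are first rewritten as constants
  simp only [← map_ofNat (C (R := R)), coeff_two_mul, coeff_one_mul, map_add, map_sub, map_mul,
    map_pow, coeff_C, coeff_X, coeff_X_pow, coeff_one, constantCoeff_C, constantCoeff_X,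
    constantCoeff_one, Nat.reduceEqDiff, ↓reduceIte]
  ring
end

section
/- Let R be a commutative ring and L, S, c_1 ∈ R. In R[[t]], the coefficient of t^2 in 2(6Lt + (24L^2 + 7LS − 21S^2)t^2 + (120L^2S − 190LS^2 + 75S^3)t^3) · ((1 + St)(1 + 6Lt − 5St)(1 + 4Lt − 3St))^{-1} · (1 + c_1 t) equals 2(6c_1L − 36L^2 + 49LS − 21S^2). -/
/-!
If `u` has constant term `1` and `P` has none, then `u⁻¹ ≡ 1 - u₁ t (mod t²)`, so the coefficient
of `t²` in `P u⁻¹` is `p₂ - p₁ u₁`. Multiplying the numerator by `1 + c₁ t` gives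
`p₁ = 12L`, `p₂ = 48L² + 14LS - 42S² + 12Lc₁`, and the denominator has `u₁ = 10L - 7S`.
-/

open PowerSeries

theorem PowerSeries.coeff_two_mul_inverse_s16 {R : Type*} [CommRing R] {P u : R⟦X⟧}
    (hu : constantCoeff u = 1) (hP : constantCoeff P = 0) :
    coeff 2 (P * Ring.inverse u) = coeff 2 P - coeff 1 P * coeff 1 u := by
  set v := Ring.inverse u
  have hvu : v * u = 1 := Ring.inverse_mul_cancel u (by simp [isUnit_iff_constantCoeff, hu])
  have hu₀ : coeff 0 u = 1 := by simpa using hu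
  have hP₀ : coeff 0 P = 0 := by simpa using hP
  have hv₀ : coeff 0 v = 1 := by simpa [hu] using congrArg constantCoeff hvu
  have hv₁ : coeff 1 v = -coeff 1 u := by
    have h := congrArg (coeff 1) hvu
    simp only [coeff_mul, Finset.Nat.sum_antidiagonal_eq_sum_range_succ_mk, Finset.sum_range_succ,
      Finset.sum_range_zero, hu₀, hv₀, coeff_one, one_ne_zero, if_false, tsub_zero] at h
    linear_combination h
  simp only [coeff_mul, Finset.Nat.sum_antidiagonal_eq_sum_range_succ_mk, Finset.sum_range_succ,
    Finset.sum_range_zero, hP₀, hv₀, hv₁]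
  ring

/-- E₇-model generating function: coefficient of `t^2`. -/
theorem euler_e7_dim2 {R : Type*} [CommRing R] (L S c₁ : R) :
    (PowerSeries.coeff (R := R) 2)
      (2 * (6 * C (R := R) L * X
            + (24 * C (R := R) L ^ 2 + 7 * C (R := R) L * C (R := R) S - 21 * C (R := R) S ^ 2) * X ^ 2
            + (120 * C (R := R) L ^ 2 * C (R := R) S - 190 * C (R := R) L * C (R := R) S ^ 2
                + 75 * C (R := R) S ^ 3) * X ^ 3) *
        Ring.inverse ((1 + C (R := R) S * X) * (1 + 6 * C (R := R) L * X - 5 * C (R := R) S * X) *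
          (1 + 4 * C (R := R) L * X - 3 * C (R := R) S * X)) *
        (1 + C (R := R) c₁ * X))
      = 2 * (6 * c₁ * L - 36 * L ^ 2 + 49 * L * S - 21 * S ^ 2) := by
  have hu : (1 + C S * X) * (1 + 6 * C L * X - 5 * C S * X) * (1 + 4 * C L * X - 3 * C S * X) =
      1 + C (10 * L - 7 * S) * X + C (24 * L ^ 2 - 28 * L * S + 7 * S ^ 2) * X ^ 2
        + C (24 * L ^ 2 * S - 38 * L * S ^ 2 + 15 * S ^ 3) * X ^ 3 := by
    simp only [map_add, map_sub, map_mul, map_pow, map_ofNat]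
    ring
  have hP : 2 * (6 * C L * X + (24 * C L ^ 2 + 7 * C L * C S - 21 * C S ^ 2) * X ^ 2
        + (120 * C L ^ 2 * C S - 190 * C L * C S ^ 2 + 75 * C S ^ 3) * X ^ 3) * (1 + C c₁ * X) =
      C (12 * L) * X + C (48 * L ^ 2 + 14 * L * S - 42 * S ^ 2 + 12 * L * c₁) * X ^ 2
        + C (240 * L ^ 2 * S - 380 * L * S ^ 2 + 150 * S ^ 3
          + (48 * L ^ 2 + 14 * L * S - 42 * S ^ 2) * c₁) * X ^ 3
        + C ((240 * L ^ 2 * S - 380 * L * S ^ 2 + 150 * S ^ 3) * c₁) * X ^ 4 := by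
    simp only [map_add, map_sub, map_mul, map_pow, map_ofNat]
    ring
  rw [mul_right_comm, coeff_two_mul_inverse_s16 (by simp) (by simp), hu, hP]
  simp only [map_add, map_sub, add_mul, sub_mul, coeff_C_mul, coeff_X, coeff_X_pow, coeff_one]
  norm_num
  ring
end

section
/- Let R be a commutative ring and L, S, c_1, c_2 ∈ R. In R[[t]], the coefficient of t^3 in 12(Lt + (6LS − 5S^2)t^2) · ((1 + St)(1 + 6Lt − 5St))^{-1} · (1 + c_1 t + c_2 t^2) equals 12(−6c_1L^2 + 10c_1LS − 5c_1S^2 + c_2L + 36L^3 − 90L^2S + 75LS^2 − 20S^3). -/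
open PowerSeries

/-!
Divide the numerator, a polynomial of degree 4, by the quadratic denominator `u` to order 4:
`A = P * u + Q * X ^ 4` with `deg P ≤ 3`. Then `A * u⁻¹ = P + Q * u⁻¹ * X ^ 4`, so the
coefficient of `t ^ 3` is that of `P`, which the long division produces in closed form.
-/

namespace PowerSeries

variable {R : Type*} [CommRing R]

theorem coeff_mul_inverse_of_eq_mul_add_mul_X_pow {u A P Q : R⟦X⟧} (hu : IsUnit u) {n k : ℕ}
    (h : A = P * u + Q * X ^ n) (hk : k < n) :
    coeff k (A * Ring.inverse u) = coeff k P := by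
  rw [h, add_mul, mul_assoc P, Ring.mul_inverse_cancel u hu, mul_one, map_add, mul_right_comm Q,
    coeff_mul_X_pow', if_neg (by omega), add_zero]

theorem coeff_three_mul_inverse_quadratic (a₁ a₂ a₃ a₄ u₁ u₂ : R) :
    coeff 3 ((C a₁ * X + C a₂ * X ^ 2 + C a₃ * X ^ 3 + C a₄ * X ^ 4) *
        Ring.inverse (1 + C u₁ * X + C u₂ * X ^ 2))
      = a₃ - u₁ * (a₂ - u₁ * a₁) - u₂ * a₁ := by
  set p₂ := a₂ - u₁ * a₁
  set p₃ := a₃ - u₁ * p₂ - u₂ * a₁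
  have hu : IsUnit (1 + C u₁ * X + C u₂ * X ^ 2 : R⟦X⟧) := by
    simp [isUnit_iff_constantCoeff]
  have hdiv : C a₁ * X + C a₂ * X ^ 2 + C a₃ * X ^ 3 + C a₄ * X ^ 4
      = (C a₁ * X + C p₂ * X ^ 2 + C p₃ * X ^ 3) * (1 + C u₁ * X + C u₂ * X ^ 2)
        + (C (a₄ - u₁ * p₃ - u₂ * p₂) - C (u₂ * p₃) * X) * X ^ 4 := by
    simp only [p₂, p₃, map_sub, map_mul]
    ring
  rw [coeff_mul_inverse_of_eq_mul_add_mul_X_pow hu hdiv (by norm_num)]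
  simp

end PowerSeries

/-- E₈-model generating function: coefficient of `t^3` (elliptic fourfolds). -/
theorem euler_e8_dim3 {R : Type*} [CommRing R] (L S c₁ c₂ : R) :
    (PowerSeries.coeff (R := R) 3)
      (12 * (C (R := R) L * X + (6 * C (R := R) L * C (R := R) S - 5 * C (R := R) S ^ 2) * X ^ 2) *
        Ring.inverse ((1 + C (R := R) S * X) * (1 + 6 * C (R := R) L * X - 5 * C (R := R) S * X)) *
        (1 + C (R := R) c₁ * X + C (R := R) c₂ * X ^ 2))
      = 12 * (-6 * c₁ * L ^ 2 + 10 * c₁ * L * S - 5 * c₁ * S ^ 2 + c₂ * L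
          + 36 * L ^ 3 - 90 * L ^ 2 * S + 75 * L * S ^ 2 - 20 * S ^ 3) := by
  have hnum : 12 * (C L * X + (6 * C L * C S - 5 * C S ^ 2) * X ^ 2) * (1 + C c₁ * X + C c₂ * X ^ 2)
      = C (12 * L) * X + C (12 * (6 * L * S - 5 * S ^ 2 + L * c₁)) * X ^ 2
        + C (12 * ((6 * L * S - 5 * S ^ 2) * c₁ + L * c₂)) * X ^ 3
        + C (12 * (6 * L * S - 5 * S ^ 2) * c₂) * X ^ 4 := by
    simp only [map_add, map_sub, map_mul, map_pow, map_ofNat]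
    ring
  have hden : (1 + C S * X) * (1 + 6 * C L * X - 5 * C S * X)
      = 1 + C (6 * L - 4 * S) * X + C (S * (6 * L - 5 * S)) * X ^ 2 := by
    simp only [map_sub, map_mul, map_ofNat]
    ring
  rw [mul_right_comm, hnum, hden, coeff_three_mul_inverse_quadratic]
  ring
end
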